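/- arXiv:1810.04325 — 2 statements merged into one kernel-verified Lean document; each statement's English description precedes it below -/
import Mathlib

section
/- For a K×K binary topology matrix T with ones on the diagonal, define messages i, j (i ≠ j) to be 'aligned' if there exists k ∉ {i,j} with t_{ki} = t_{kj} = 1. If T is the 2-alliance MTM with blocks [[I_k, J],[J, I_{K−k}]] with k ≥ 2 and K−k ≥ 2, then the alignment relation's connected components are exactly A₁ = {1,…,k} and A₂ = {k+1,…,K}. -/
theorem stmt15 (K k : ℕ) (hk : 2 ≤ k) (hK : k + 2 ≤ K)
    (T : Fin K → Fin K → ℕ)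
    (hT : ∀ i j : Fin K, T i j =
      if i = j ∨ (i.val < k ∧ k ≤ j.val) ∨ (j.val < k ∧ k ≤ i.val) then 1 else 0) :
    ∀ i j : Fin K,
      Relation.ReflTransGen
        (fun x y : Fin K => x ≠ y ∧ ∃ m : Fin K, m ≠ x ∧ m ≠ y ∧ T m x = 1 ∧ T m y = 1) i j
      ↔ ((i.val < k) ↔ (j.val < k)) := by
  intro i j
  constructor
  · intro h
    induction h with
    | refl => rfl
    | tail _ step ih =>
      rename_i b c _
      obtain ⟨hne, m, hmb, hmc, h1, h2⟩ := step
      rw [hT] at h1 h2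
      rw [Ne, Fin.ext_iff] at hmb hmc
      have P1 : m = b ∨ (m.val < k ∧ k ≤ b.val) ∨ (b.val < k ∧ k ≤ m.val) := by
        by_contra hP; rw [if_neg hP] at h1; exact absurd h1 (by norm_num)
      have P2 : m = c ∨ (m.val < k ∧ k ≤ c.val) ∨ (c.val < k ∧ k ≤ m.val) := by
        by_contra hP; rw [if_neg hP] at h2; exact absurd h2 (by norm_num)
      rw [Fin.ext_iff] at P1 P2
      rw [ih]
      omega
  · intro h
    by_cases hij : i = j
    · subst hij; exact Relation.ReflTransGen.refl
    · apply Relation.ReflTransGen.single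
      refine ⟨hij, ?_⟩
      by_cases hi : i.val < k
      · have hj : j.val < k := h.mp hi
        refine ⟨⟨k, by omega⟩, ?_, ?_, ?_, ?_⟩
        · rw [Ne, Fin.ext_iff]; simp; omega
        · rw [Ne, Fin.ext_iff]; simp; omega
        · rw [hT, if_pos]; right; right; exact ⟨hi, le_refl k⟩
        · rw [hT, if_pos]; right; right; exact ⟨hj, le_refl k⟩
      · have hj : ¬ j.val < k := fun hj => hi (h.mpr hj)
        refine ⟨⟨0, by omega⟩, ?_, ?_, ?_, ?_⟩
        · rw [Ne, Fin.ext_iff]; simp; omega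
        · rw [Ne, Fin.ext_iff]; simp; omega
        · rw [hT, if_pos]; right; left; simp; omega
        · rw [hT, if_pos]; right; left; simp; omega
end

section
/- If in a partition of messages into alliances with sub-alliances there exist distinct alliances A_i, A_j with A_{i,j} = A_{j,i} = ∅ (no hostility between them), then the topology is not maximal: one can add at least one conflict edge without creating an internal conflict. -/
/-- Key combinatorial lemma: if the pair `(u, w)` satisfies six compatibility
conditions, then adding the conflict edge `u → w` creates no internal conflict. -/
theorem stmt18_key {M : Type*} {N : ℕ} (a t : M → Fin N) (ht : ∀ m : M, t m ≠ a m)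
    (u w : M) (h3 : a w ≠ a u) (h4 : t u ≠ t w)
    (h5 : ∀ m, a m = t w → t m ≠ a u)
    (h6 : (∃ z, t z = a u) → ∀ m, a m = a u → t m ≠ t w) :
    ¬ ∃ p q : M, p ≠ q ∧
      Relation.ReflTransGen (fun x y => x ≠ y ∧ ∃ z : M, z ≠ x ∧ z ≠ y ∧
        (a x = t z ∨ (x = u ∧ z = w)) ∧ (a y = t z ∨ (y = u ∧ z = w))) p q ∧
      ((a p = t q ∨ (p = u ∧ q = w)) ∨ (a q = t p ∨ (q = u ∧ p = w))) := by
  rintro ⟨p, q, hpq, hrt, hconf⟩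
  -- the saturated set
  let Sp : M → Prop := fun x => x = u ∨ a x = t w ∨ (a x = a u ∧ ∃ z, t z = a u)
  -- the invariant relation containing all alignment chains
  have hR : ∀ x y : M, Relation.ReflTransGen (fun x y => x ≠ y ∧ ∃ z : M, z ≠ x ∧ z ≠ y ∧
      (a x = t z ∨ (x = u ∧ z = w)) ∧ (a y = t z ∨ (y = u ∧ z = w))) x y →
      x = y ∨ (Sp x ∧ Sp y) ∨ (a x = a y ∧ ∃ z, t z = a x) := by
    intro x y h
    induction h with
    | refl => exact Or.inl rfl
    | @tail b c _ hstep ih =>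
      obtain ⟨hbc, z, hzb, hzc, hb, hc⟩ := hstep
      have hstep' : (Sp b ∧ Sp c) ∨ (a b = a c ∧ ∃ z, t z = a b) := by
        rcases hb with hb | ⟨hb1, hb2⟩
        · rcases hc with hc | ⟨hc1, hc2⟩
          · exact Or.inr ⟨hb.trans hc.symm, z, hb.symm⟩
          · exact Or.inl ⟨Or.inr (Or.inl (hc2 ▸ hb)), Or.inl hc1⟩
        · rcases hc with hc | ⟨hc1, hc2⟩
          · exact Or.inl ⟨Or.inl hb1, Or.inr (Or.inl (hb2 ▸ hc))⟩
          · exact absurd (hb1.trans hc1.symm) hbc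
      rcases ih with rfl | ⟨hSx, hSb⟩ | ⟨hab, wit⟩
      · rcases hstep' with ⟨h1, h2⟩ | ⟨h1, h2⟩
        · exact Or.inr (Or.inl ⟨h1, h2⟩)
        · exact Or.inr (Or.inr ⟨h1, h2⟩)
      · -- Sp x and Sp b; show Sp c
        have hSc : Sp c := by
          rcases hstep' with ⟨_, h⟩ | ⟨hbc', wit⟩
          · exact h
          · rcases hSb with hb' | h | ⟨h, witu⟩
            · exact Or.inr (Or.inr ⟨hbc'.symm.trans (hb' ▸ rfl), hb' ▸ wit⟩)
            · exact Or.inr (Or.inl (hbc'.symm.trans h))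
            · exact Or.inr (Or.inr ⟨hbc'.symm.trans h, witu⟩)
        exact Or.inr (Or.inl ⟨hSx, hSc⟩)
      · -- a x = a b with witness
        rcases hstep' with ⟨hSb, hSc⟩ | ⟨hbc', _⟩
        · have hSx : Sp x := by
            rcases hSb with hb' | h | ⟨h, witu⟩
            · exact Or.inr (Or.inr ⟨hab.trans (hb' ▸ rfl),
                wit.imp fun z' hz' => hz'.trans (hab.trans (hb' ▸ rfl))⟩)
            · exact Or.inr (Or.inl (hab.trans h))
            · exact Or.inr (Or.inr ⟨hab.trans h, witu⟩)
          exact Or.inr (Or.inl ⟨hSx, hSc⟩)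
        · exact Or.inr (Or.inr ⟨hab.trans hbc', wit⟩)
  -- no conflict can be internal
  have noconf : ∀ p' q' : M, p' ≠ q' →
      (p' = q' ∨ (Sp p' ∧ Sp q') ∨ (a p' = a q' ∧ ∃ z, t z = a p')) →
      (a p' = t q' ∨ (p' = u ∧ q' = w)) → False := by
    intro p' q' hne hRel hC
    rcases hRel with hpq' | ⟨hSp', hSq'⟩ | ⟨heq, _⟩
    · exact hne hpq'
    · rcases hC with hC | ⟨hpu, hqw⟩
      · rcases hSq' with hq | hq | ⟨hq, witu⟩
        · -- q' = u : a p' = t u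
          have hC' : a p' = t u := hq ▸ hC
          rcases hSp' with hp | hp | ⟨hp, _⟩
          · exact ht u (hC'.symm.trans (hp ▸ rfl))
          · exact h4 (hC'.symm.trans hp)
          · exact ht u (hC'.symm.trans hp)
        · -- a q' = t w
          rcases hSp' with hp | hp | ⟨hp, _⟩
          · exact h5 q' hq (hC.symm.trans (hp ▸ rfl))
          · exact ht q' ((hC.symm.trans hp).trans hq.symm)
          · exact h5 q' hq (hC.symm.trans hp)
        · -- a q' = a u with witness
          rcases hSp' with hp | hp | ⟨hp, _⟩
          · exact ht q' ((hC.symm.trans (hp ▸ rfl)).trans hq.symm)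
          · exact h6 witu q' hq (hC.symm.trans hp)
          · exact ht q' ((hC.symm.trans hp).trans hq.symm)
      · -- new edge, p' = u, q' = w with Sp w
        rcases hSq' with hq | hq | ⟨hq, _⟩
        · exact hne (hpu.trans hq.symm)
        · exact ht w (hqw ▸ hq).symm
        · exact h3 (hqw ▸ hq)
    · rcases hC with hC | ⟨hpu, hqw⟩
      · exact ht q' (hC.symm.trans heq)
      · exact h3 (hqw ▸ hpu ▸ heq).symm
  have hRpq := hR p q hrt
  have hRsymm : (q = p ∨ (Sp q ∧ Sp p) ∨ (a q = a p ∧ ∃ z, t z = a q)) := by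
    rcases hRpq with rfl | ⟨h1, h2⟩ | ⟨h1, z, hz⟩
    · exact Or.inl rfl
    · exact Or.inr (Or.inl ⟨h2, h1⟩)
    · exact Or.inr (Or.inr ⟨h1.symm, z, hz.trans h1⟩)
  rcases hconf with hC | hC
  · exact noconf p q hpq hRpq hC
  · exact noconf q p hpq.symm hRsymm hC

/-- Lemma 3: if two distinct alliances `i`, `j` have both cross sub-alliances empty
(no hostility between them), the topology is not maximal: some conflict edge can be
added without creating an internal conflict. -/
theorem stmt18 {M : Type*} [Fintype M] (N : ℕ) (hN : 2 ≤ N)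
    (a t : M → Fin N) (hsurj : Function.Surjective a)
    (ht : ∀ m : M, t m ≠ a m)
    (i j : Fin N) (hij : i ≠ j)
    (hempty₁ : ∀ m : M, ¬ (a m = i ∧ t m = j))
    (hempty₂ : ∀ m : M, ¬ (a m = j ∧ t m = i)) :
    ∃ u w : M, u ≠ w ∧ ¬ (a u = t w) ∧
      (let C' : M → M → Prop := fun x y => a x = t y ∨ (x = u ∧ y = w)
       let aligned : M → M → Prop :=
         fun x y => x ≠ y ∧ ∃ z : M, z ≠ x ∧ z ≠ y ∧ C' x z ∧ C' y z
       ¬ ∃ p q : M, p ≠ q ∧ Relation.ReflTransGen aligned p q ∧ (C' p q ∨ C' q p)) := by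
  by_cases hA : ∃ w₀ : M, t w₀ = j
  · -- someone targets alliance j : add edge from A_i to that message
    obtain ⟨w, hw⟩ := hA
    obtain ⟨u, hu⟩ := hsurj i
    refine ⟨u, w, ?_, ?_, ?_⟩
    · rintro rfl
      exact hempty₁ u ⟨hu, hw⟩
    · rw [hu, hw]; exact hij
    · exact stmt18_key a t ht u w
        (fun h => hempty₁ w ⟨h.trans hu, hw⟩)
        (fun h => hempty₁ u ⟨hu, h.trans hw⟩)
        (fun m hm h => hempty₂ m ⟨hm.trans hw, h.trans hu⟩)
        (fun _ m hm h => hempty₁ m ⟨hm.trans hu, h.trans hw⟩)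
  · by_cases hB : ∃ w₀ : M, t w₀ = i
    · -- someone targets alliance i : add edge from A_j to that message
      obtain ⟨w, hw⟩ := hB
      obtain ⟨u, hu⟩ := hsurj j
      refine ⟨u, w, ?_, ?_, ?_⟩
      · rintro rfl
        exact hempty₂ u ⟨hu, hw⟩
      · rw [hu, hw]; exact hij.symm
      · exact stmt18_key a t ht u w
          (fun h => hempty₂ w ⟨h.trans hu, hw⟩)
          (fun h => hempty₂ u ⟨hu, h.trans hw⟩)
          (fun m hm h => hempty₁ m ⟨hm.trans hw, h.trans hu⟩)
          (fun _ m hm h => hempty₂ m ⟨hm.trans hu, h.trans hw⟩)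
    · -- nobody targets i or j
      push_neg at hA hB
      obtain ⟨u, hu⟩ := hsurj i
      obtain ⟨w, hw⟩ := hsurj (t u)
      refine ⟨u, w, ?_, ?_, ?_⟩
      · rintro rfl
        exact ht u hw.symm
      · intro h
        exact hB w (h.symm.trans hu)
      · exact stmt18_key a t ht u w
          (fun h => ht u (hw.symm.trans h))
          (fun h => ht w (hw.trans h).symm)
          (fun m _ h => hB m (h.trans hu))
          (fun hz => absurd (hz.choose_spec.trans hu) (fun hh => hB hz.choose hh))
end
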